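/- arXiv:2602.04694 — 2 statements merged into one kernel-verified Lean document; each statement's English description precedes it below -/
import Mathlib

section
/- The maximum of the table entries, max_{u ∈ {0,...,n}, v ∈ {0,...,m}} A_{u,v}, equals the similarity score s(G,H) = max_{p ∈ P} s(p), where P = ∪_{u,v} P_{u,v} is the set of all valid matchings between G and H. -/
/-- `a` is the parent of `b` (and `b` is not the root `0`). -/
def ChildRel {n : ℕ} (anc : Fin (n+1) → Fin (n+1)) (a b : Fin (n+1)) : Prop :=
  b ≠ 0 ∧ anc b = a

/-- `u <_T v`: `u` is a proper ancestor of `v`. -/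
def TreeLt {n : ℕ} (anc : Fin (n+1) → Fin (n+1)) : Fin (n+1) → Fin (n+1) → Prop :=
  Relation.TransGen (ChildRel anc)

/-- `u ≤_T v`: reflexive closure of the proper-ancestor relation. -/
def TreeLe {n : ℕ} (anc : Fin (n+1) → Fin (n+1)) : Fin (n+1) → Fin (n+1) → Prop :=
  Relation.ReflTransGen (ChildRel anc)

/-- A valid matching between the trees given by `ancG` and `ancH`. -/
def ValidMatching {n m : ℕ} (ancG : Fin (n+1) → Fin (n+1)) (ancH : Fin (m+1) → Fin (m+1))
    (p : List (Fin (n+1) × Fin (m+1))) : Prop :=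
  List.Chain' (fun x y => TreeLt ancG x.1 y.1 ∧ TreeLt ancH x.2 y.2) p

/-- A valid partial matching up to `(u, v)`. -/
def PartialUpTo {n m : ℕ} (ancG : Fin (n+1) → Fin (n+1)) (ancH : Fin (m+1) → Fin (m+1))
    (p : List (Fin (n+1) × Fin (m+1))) (u : Fin (n+1)) (v : Fin (m+1)) : Prop :=
  ValidMatching ancG ancH p ∧ ∀ q ∈ p.getLast?, TreeLe ancG q.1 u ∧ TreeLe ancH q.2 v

/-- A valid partial matching up to a pair of extended (possibly virtual `-1 = none`) nodes:
the only valid partial matching up to a pair with a virtual coordinate is the empty matching. -/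
def PartialUpToO {n m : ℕ} (ancG : Fin (n+1) → Fin (n+1)) (ancH : Fin (m+1) → Fin (m+1))
    (p : List (Fin (n+1) × Fin (m+1)))
    (u? : Option (Fin (n+1))) (v? : Option (Fin (m+1))) : Prop :=
  match u?, v? with
  | some u, some v => PartialUpTo ancG ancH p u v
  | _, _ => p = []

/-- Extended ancestor function: the parent of the root `0` is the virtual node `none` (i.e. `-1`). -/
def ancO {n : ℕ} (anc : Fin (n+1) → Fin (n+1)) (u : Fin (n+1)) : Option (Fin (n+1)) :=
  if u = 0 then none else some (anc u)

/-- The score of a matching. -/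
def score {n m : ℕ} {S : Type*} (w : S → S → ℝ)
    (φG : Fin (n+1) → S) (φH : Fin (m+1) → S)
    (p : List (Fin (n+1) × Fin (m+1))) : ℝ :=
  (p.map (fun q => w (φG q.1) (φH q.2))).sum

/-!
`A u v` is the greatest score of a valid partial matching up to `(u, v)`, by induction along the
recursion. A partial matching up to `(u, v)` either stays up to `(anc u, v)`, or up to
`(u, anc v)`, or it ends with the pair `(u, v)` itself, preceded by a partial matching up to
`(anc u, anc v)`; these three cases are the three terms of the recursion. Every valid matching is
a partial matching up to its last pair, so the largest table entry is the similarity score.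
-/

section Trees

variable {n : ℕ} {anc : Fin (n+1) → Fin (n+1)}

lemma treeLe_refl (a : Fin (n+1)) : TreeLe anc a a := .refl

lemma treeLe_iff_eq_or_treeLt {a u : Fin (n+1)} : TreeLe anc a u ↔ a = u ∨ TreeLt anc a u := by
  rw [TreeLe, Relation.reflTransGen_iff_eq_or_transGen, eq_comm, TreeLt]

lemma treeLt_iff_exists_ancO {a u : Fin (n+1)} :
    TreeLt anc a u ↔ ∃ b ∈ ancO anc u, TreeLe anc a b := by
  rw [TreeLt, Relation.TransGen.tail'_iff]
  unfold ancO
  split_ifs with hu <;> simp [ChildRel, hu, TreeLe]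

lemma elim_ancO_le (hanc : ∀ v : Fin (n+1), v ≠ 0 → anc v < v) (u : Fin (n+1)) :
    (ancO anc u).elim 0 (fun a => a.val + 1) ≤ u.val := by
  unfold ancO
  split_ifs with hu
  · exact Nat.zero_le _
  · exact hanc u hu

end Trees

section Matchings

variable {n m : ℕ} {ancG : Fin (n+1) → Fin (n+1)} {ancH : Fin (m+1) → Fin (m+1)}

variable (ancG ancH) in
def partialMatchings (u? : Option (Fin (n+1))) (v? : Option (Fin (m+1))) :
    Set (List (Fin (n+1) × Fin (m+1))) :=
  {p | PartialUpToO ancG ancH p u? v?}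

lemma validMatching_iff_isChain {p : List (Fin (n+1) × Fin (m+1))} :
    ValidMatching ancG ancH p ↔ p.IsChain (fun x y => TreeLt ancG x.1 y.1 ∧ TreeLt ancH x.2 y.2) :=
  Iff.rfl

lemma mem_partialMatchings {p : List (Fin (n+1) × Fin (m+1))} {u? : Option (Fin (n+1))}
    {v? : Option (Fin (m+1))} :
    p ∈ partialMatchings ancG ancH u? v? ↔ ValidMatching ancG ancH p ∧
      ∀ q ∈ p.getLast?, (∃ u ∈ u?, TreeLe ancG q.1 u) ∧ ∃ v ∈ v?, TreeLe ancH q.2 v := by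
  rcases u? with _ | u <;> rcases v? with _ | v
  case some.some =>
    simp only [Option.mem_def, Option.some.injEq, exists_eq_left']
    rfl
  all_goals
    rcases p.eq_nil_or_concat' with rfl | ⟨p, q, rfl⟩ <;>
      simp [partialMatchings, PartialUpToO, validMatching_iff_isChain]

lemma validMatching_concat {p : List (Fin (n+1) × Fin (m+1))} {q : Fin (n+1) × Fin (m+1)} :
    ValidMatching ancG ancH (p ++ [q]) ↔ ValidMatching ancG ancH p ∧
      ∀ x ∈ p.getLast?, TreeLt ancG x.1 q.1 ∧ TreeLt ancH x.2 q.2 := by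
  simp [validMatching_iff_isChain, List.isChain_append]

lemma nil_mem_partialMatchings (u? : Option (Fin (n+1))) (v? : Option (Fin (m+1))) :
    [] ∈ partialMatchings ancG ancH u? v? :=
  mem_partialMatchings.2 ⟨List.isChain_nil, by simp⟩

lemma partialMatchings_none_left (v? : Option (Fin (m+1))) :
    partialMatchings ancG ancH none v? = {[]} := by
  ext p; cases v? <;> rfl

lemma partialMatchings_none_right (u? : Option (Fin (n+1))) :
    partialMatchings ancG ancH u? none = {[]} := by
  ext p; cases u? <;> rfl

lemma concat_mem_partialMatchings {p : List (Fin (n+1) × Fin (m+1))}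
    {q : Fin (n+1) × Fin (m+1)} {u? : Option (Fin (n+1))} {v? : Option (Fin (m+1))} :
    p ++ [q] ∈ partialMatchings ancG ancH u? v? ↔ ValidMatching ancG ancH (p ++ [q]) ∧
      (∃ u ∈ u?, TreeLe ancG q.1 u) ∧ ∃ v ∈ v?, TreeLe ancH q.2 v := by
  simp [mem_partialMatchings, -Prod.forall]

theorem partialMatchings_some_some (u : Fin (n+1)) (v : Fin (m+1)) :
    partialMatchings ancG ancH (some u) (some v) =
      partialMatchings ancG ancH (ancO ancG u) (some v) ∪
        partialMatchings ancG ancH (some u) (ancO ancH v) ∪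
        (· ++ [(u, v)]) '' partialMatchings ancG ancH (ancO ancG u) (ancO ancH v) := by
  ext p
  rcases p.eq_nil_or_concat' with rfl | ⟨p, ⟨a, b⟩, rfl⟩
  · simp [nil_mem_partialMatchings]
  have hlast : ∀ r : List (Fin (n+1) × Fin (m+1)), r ++ [(u, v)] = p ++ [(a, b)] ↔
      (a = u ∧ b = v) ∧ r = p := by
    simp [eq_comm, and_comm]
  simp only [Set.mem_union, Set.mem_image, hlast, exists_eq_right_right,
    concat_mem_partialMatchings, Option.mem_some_iff, exists_eq_left', ← treeLt_iff_exists_ancO]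
  simp only [mem_partialMatchings, validMatching_concat, ← treeLt_iff_exists_ancO]
  rw [treeLe_iff_eq_or_treeLt, treeLe_iff_eq_or_treeLt]
  constructor
  · rintro ⟨hp, rfl | ha, rfl | hb⟩
    · exact Or.inr ⟨hp, rfl, rfl⟩
    · exact Or.inl (Or.inr ⟨hp, Or.inl rfl, hb⟩)
    · exact Or.inl (Or.inl ⟨hp, ha, Or.inl rfl⟩)
    · exact Or.inl (Or.inl ⟨hp, ha, Or.inr hb⟩)
  · rintro ((⟨hp, ha, hb⟩ | ⟨hp, ha, hb⟩) | ⟨hp, rfl, rfl⟩)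
    · exact ⟨hp, Or.inr ha, hb⟩
    · exact ⟨hp, ha, Or.inr hb⟩
    · exact ⟨hp, Or.inl rfl, Or.inl rfl⟩

lemma ValidMatching.exists_mem_partialMatchings {p : List (Fin (n+1) × Fin (m+1))}
    (hp : ValidMatching ancG ancH p) :
    ∃ u v, p ∈ partialMatchings ancG ancH (some u) (some v) := by
  rcases p.eq_nil_or_concat' with rfl | ⟨p, ⟨u, v⟩, rfl⟩
  · exact ⟨0, 0, nil_mem_partialMatchings _ _⟩
  · exact ⟨u, v, concat_mem_partialMatchings.2
      ⟨hp, ⟨u, rfl, treeLe_refl u⟩, ⟨v, rfl, treeLe_refl v⟩⟩⟩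

end Matchings

section DP

variable {n m : ℕ} {ancG : Fin (n+1) → Fin (n+1)} {ancH : Fin (m+1) → Fin (m+1)}
  {S : Type*} {φG : Fin (n+1) → S} {φH : Fin (m+1) → S} {w : S → S → ℝ}
  {A : Option (Fin (n+1)) → Option (Fin (m+1)) → ℝ}

lemma score_concat (p : List (Fin (n+1) × Fin (m+1))) (q : Fin (n+1) × Fin (m+1)) :
    score w φG φH (p ++ [q]) = score w φG φH p + w (φG q.1) (φH q.2) := by
  simp [score]

theorem isGreatest_score_partialMatchings
    (hG : ∀ v : Fin (n+1), v ≠ 0 → ancG v < v) (hH : ∀ v : Fin (m+1), v ≠ 0 → ancH v < v)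
    (hAbase1 : ∀ v? : Option (Fin (m+1)), A none v? = 0)
    (hAbase2 : ∀ u? : Option (Fin (n+1)), A u? none = 0)
    (hArec : ∀ (u : Fin (n+1)) (v : Fin (m+1)),
      A (some u) (some v) =
        max (max (A (ancO ancG u) (some v)) (A (some u) (ancO ancH v)))
          (w (φG u) (φH v) + A (ancO ancG u) (ancO ancH v))) :
    ∀ u? v?, IsGreatest (score w φG φH '' partialMatchings ancG ancH u? v?) (A u? v?)
  | none, v? => by
    simp [partialMatchings_none_left, hAbase1, score, isGreatest_singleton]
  | some u, none => by
    simp [partialMatchings_none_right, hAbase2, score, isGreatest_singleton]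
  | some u, some v => by
    have hskipG := isGreatest_score_partialMatchings hG hH hAbase1 hAbase2 hArec
      (ancO ancG u) (some v)
    have hskipH := isGreatest_score_partialMatchings hG hH hAbase1 hAbase2 hArec
      (some u) (ancO ancH v)
    have hmatch := (add_left_mono (a := w (φG u) (φH v))).map_isGreatest <|
      isGreatest_score_partialMatchings hG hH hAbase1 hAbase2 hArec (ancO ancG u) (ancO ancH v)
    rw [Set.image_image] at hmatch
    rw [partialMatchings_some_some, Set.image_union, Set.image_union, Set.image_image, hArec]
    simpa only [score_concat, add_comm] using (hskipG.union hskipH).union hmatch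
termination_by u? v? => u?.elim 0 (·.val + 1) + v?.elim 0 (·.val + 1)
decreasing_by
  all_goals
    have := elim_ancO_le hG u
    have := elim_ancO_le hH v
    simp only [Option.elim_some]
    omega

end DP

theorem max_dp_table_eq_similarity_score_general
    (n m : ℕ) (ancG : Fin (n+1) → Fin (n+1)) (ancH : Fin (m+1) → Fin (m+1))
    (hG : ∀ v : Fin (n+1), v ≠ 0 → ancG v < v)
    (hH : ∀ v : Fin (m+1), v ≠ 0 → ancH v < v)
    {S : Type*} (φG : Fin (n+1) → S) (φH : Fin (m+1) → S)
    (w : S → S → ℝ)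
    (A : Option (Fin (n+1)) → Option (Fin (m+1)) → ℝ)
    (hAbase1 : ∀ v? : Option (Fin (m+1)), A none v? = 0)
    (hAbase2 : ∀ u? : Option (Fin (n+1)), A u? none = 0)
    (hArec : ∀ (u : Fin (n+1)) (v : Fin (m+1)),
      A (some u) (some v) =
        max (max (A (ancO ancG u) (some v)) (A (some u) (ancO ancH v)))
          (w (φG u) (φH v) + A (ancO ancG u) (ancO ancH v))) :
    IsGreatest {x : ℝ | ∃ p : List (Fin (n+1) × Fin (m+1)),
        ValidMatching ancG ancH p ∧ score w φG φH p = x}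
      ((Finset.univ : Finset (Fin (n+1) × Fin (m+1))).sup' Finset.univ_nonempty
        (fun uv => A (some uv.1) (some uv.2))) := by
  have hA := isGreatest_score_partialMatchings hG hH hAbase1 hAbase2 hArec
  constructor
  · obtain ⟨⟨u, v⟩, -, hmax⟩ := Finset.exists_mem_eq_sup' Finset.univ_nonempty
      (fun uv : Fin (n+1) × Fin (m+1) => A (some uv.1) (some uv.2))
    obtain ⟨p, hp, hscore⟩ := (hA (some u) (some v)).1
    exact ⟨p, (mem_partialMatchings.1 hp).1, hscore.trans hmax.symm⟩
  · rintro _ ⟨p, hp, rfl⟩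
    obtain ⟨u, v, hpuv⟩ := hp.exists_mem_partialMatchings
    exact ((hA (some u) (some v)).2 ⟨p, hpuv, rfl⟩).trans
      (Finset.le_sup' (fun uv : Fin (n+1) × Fin (m+1) => A (some uv.1) (some uv.2))
        (Finset.mem_univ (u, v)))

/-- The maximum of the DP table entries over all (non-virtual) pairs `(u, v)`
equals the similarity score `s(G, H)`, the maximum of `s(p)` over all valid matchings `p`. -/
theorem max_dp_table_eq_similarity_score
    (n m : ℕ) (ancG : Fin (n+1) → Fin (n+1)) (ancH : Fin (m+1) → Fin (m+1))
    (hG : ∀ v : Fin (n+1), v ≠ 0 → ancG v < v)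
    (hH : ∀ v : Fin (m+1), v ≠ 0 → ancH v < v)
    {S : Type*} (φG : Fin (n+1) → S) (φH : Fin (m+1) → S)
    (w : S → S → ℝ) (hw : ∀ a b : S, 0 ≤ w a b)
    (A : Option (Fin (n+1)) → Option (Fin (m+1)) → ℝ)
    (hAbase1 : ∀ v? : Option (Fin (m+1)), A none v? = 0)
    (hAbase2 : ∀ u? : Option (Fin (n+1)), A u? none = 0)
    (hArec : ∀ (u : Fin (n+1)) (v : Fin (m+1)),
      A (some u) (some v) =
        max (max (A (ancO ancG u) (some v)) (A (some u) (ancO ancH v)))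
          (w (φG u) (φH v) + A (ancO ancG u) (ancO ancH v))) :
    IsGreatest {x : ℝ | ∃ p : List (Fin (n+1) × Fin (m+1)),
        ValidMatching ancG ancH p ∧ score w φG φH p = x}
      ((Finset.univ : Finset (Fin (n+1) × Fin (m+1))).sup' Finset.univ_nonempty
        (fun uv => A (some uv.1) (some uv.2))) :=
  max_dp_table_eq_similarity_score_general n m ancG ancH hG hH φG φH w A hAbase1 hAbase2 hArec
end

section
/- There exists a valid matching p between G and H whose score attains the similarity score: s(p) = s(G,H) = max_{u ∈ {0,...,n}, v ∈ {0,...,m}} A_{u,v}; that is, the maximum over all valid matchings is attained by some valid matching. -/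
/-!
The table entry `A (some u) (some v)` is the best score of a valid partial matching up to
`(u, v)`. Such a matching either stays strictly below `u` in `G`, or strictly below `v` in `H`,
or ends with the pair `(u, v)` itself, preceded by a partial matching up to the two parents;
these are the three branches of the recurrence, so both the bound and its attainment follow by
induction along the parent functions. Every valid matching is a partial matching up to its last
pair, hence the maximum of the table is the similarity score.
-/

section Tree

variable {k : ℕ} {anc : Fin (k+1) → Fin (k+1)}

lemma exists_mem_ancO_treeLe_iff {a u : Fin (k+1)} :
    (∃ p ∈ ancO anc u, TreeLe anc a p) ↔ TreeLt anc a u := by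
  rw [TreeLt, Relation.TransGen.tail'_iff]
  unfold ancO
  split_ifs with hu
  · constructor
    · rintro ⟨p, ⟨⟩, -⟩
    · rintro ⟨c, -, hc, -⟩
      exact absurd hu hc
  · simp only [Option.mem_def, Option.some.injEq, exists_eq_left']
    constructor
    · exact fun h => ⟨anc u, h, hu, rfl⟩
    · rintro ⟨c, hac, -, rfl⟩
      exact hac

lemma ancO_rec_lt (h : ∀ v : Fin (k+1), v ≠ 0 → anc v < v)
    {Q : Option (Fin (k+1)) → Prop} (u : Fin (k+1))
    (hnone : Q none) (hsome : ∀ a < u, Q (some a)) : Q (ancO anc u) := by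
  unfold ancO
  split_ifs with hu
  · exact hnone
  · exact hsome _ (h u hu)

end Tree

lemma ancO_induction {n m : ℕ} {ancG : Fin (n+1) → Fin (n+1)} {ancH : Fin (m+1) → Fin (m+1)}
    (hG : ∀ v : Fin (n+1), v ≠ 0 → ancG v < v) (hH : ∀ v : Fin (m+1), v ≠ 0 → ancH v < v)
    {P : Option (Fin (n+1)) → Option (Fin (m+1)) → Prop}
    (none_left : ∀ v?, P none v?) (none_right : ∀ u?, P u? none)
    (step : ∀ u v, P (ancO ancG u) (some v) → P (some u) (ancO ancH v) →
      P (ancO ancG u) (ancO ancH v) → P (some u) (some v))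
    (u? : Option (Fin (n+1))) (v? : Option (Fin (m+1))) : P u? v? := by
  rcases u? with _ | u
  · exact none_left _
  rcases v? with _ | v
  · exact none_right _
  induction u using WellFoundedLT.induction generalizing v with | _ u ihu
  induction v using WellFoundedLT.induction with | _ v ihv
  apply step
  · exact ancO_rec_lt (Q := (P · (some v))) hG u (none_left _) fun a ha => ihu a ha v
  · exact ancO_rec_lt hH v (none_right _) ihv
  · exact ancO_rec_lt (Q := (P · (ancO ancH v))) hG u (none_left _) fun a ha =>
      ancO_rec_lt hH v (none_right _) fun b _ => ihu a ha b

section Matching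

variable {n m : ℕ} {ancG : Fin (n+1) → Fin (n+1)} {ancH : Fin (m+1) → Fin (m+1)}
  {q : List (Fin (n+1) × Fin (m+1))}

-- `none` has no node below it, so at a virtual coordinate the condition forces `q = []`.
lemma partialUpToO_iff {u? : Option (Fin (n+1))} {v? : Option (Fin (m+1))} :
    PartialUpToO ancG ancH q u? v? ↔ ValidMatching ancG ancH q ∧ ∀ x ∈ q.getLast?,
      (∃ u ∈ u?, TreeLe ancG x.1 u) ∧ (∃ v ∈ v?, TreeLe ancH x.2 v) := by
  rcases u? with _ | u <;> rcases v? with _ | v <;>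
    simp only [PartialUpToO, PartialUpTo, ValidMatching, Option.mem_def, reduceCtorEq,
      false_and, exists_false, and_false, imp_false, Option.some.injEq, exists_eq_left']
  all_goals
    constructor
    · rintro rfl
      exact ⟨List.isChain_nil, by simp⟩
    · rintro ⟨-, h⟩
      exact List.getLast?_eq_none_iff.mp (Option.eq_none_iff_forall_ne_some.mpr h)

lemma ValidMatching.exists_partialUpTo (hq : ValidMatching ancG ancH q) :
    ∃ u v, PartialUpTo ancG ancH q u v := by
  rcases List.eq_nil_or_concat q with rfl | ⟨q', x, rfl⟩
  · exact ⟨0, 0, hq, by simp⟩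
  · refine ⟨x.1, x.2, hq, ?_⟩
    simp only [List.concat_eq_append, List.getLast?_concat, Option.mem_def, Option.some.injEq]
    rintro _ rfl
    exact ⟨.refl, .refl⟩

lemma PartialUpToO.of_ancO_left {u : Fin (n+1)} {v? : Option (Fin (m+1))}
    (h : PartialUpToO ancG ancH q (ancO ancG u) v?) : PartialUpToO ancG ancH q (some u) v? := by
  rw [partialUpToO_iff] at h ⊢
  refine ⟨h.1, fun x hx => ⟨⟨u, rfl, ?_⟩, (h.2 x hx).2⟩⟩
  exact (exists_mem_ancO_treeLe_iff.mp (h.2 x hx).1).to_reflTransGen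

lemma PartialUpToO.of_ancO_right {u? : Option (Fin (n+1))} {v : Fin (m+1)}
    (h : PartialUpToO ancG ancH q u? (ancO ancH v)) : PartialUpToO ancG ancH q u? (some v) := by
  rw [partialUpToO_iff] at h ⊢
  refine ⟨h.1, fun x hx => ⟨(h.2 x hx).1, ⟨v, rfl, ?_⟩⟩⟩
  exact (exists_mem_ancO_treeLe_iff.mp (h.2 x hx).2).to_reflTransGen

lemma PartialUpToO.append_singleton {u : Fin (n+1)} {v : Fin (m+1)}
    (h : PartialUpToO ancG ancH q (ancO ancG u) (ancO ancH v)) :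
    PartialUpToO ancG ancH (q ++ [(u, v)]) (some u) (some v) := by
  rw [partialUpToO_iff] at h ⊢
  refine ⟨List.isChain_append.mpr ⟨h.1, List.isChain_singleton _, ?_⟩, ?_⟩
  · rintro x hx _ ⟨⟩
    exact ⟨exists_mem_ancO_treeLe_iff.mp (h.2 x hx).1, exists_mem_ancO_treeLe_iff.mp (h.2 x hx).2⟩
  · simp only [List.getLast?_concat, Option.mem_def, Option.some.injEq]
    rintro _ rfl
    exact ⟨⟨u, rfl, .refl⟩, ⟨v, rfl, .refl⟩⟩

lemma PartialUpToO.cases {u : Fin (n+1)} {v : Fin (m+1)}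
    (h : PartialUpToO ancG ancH q (some u) (some v)) :
    PartialUpToO ancG ancH q (ancO ancG u) (some v) ∨
      PartialUpToO ancG ancH q (some u) (ancO ancH v) ∨
      ∃ q', q = q' ++ [(u, v)] ∧ PartialUpToO ancG ancH q' (ancO ancG u) (ancO ancH v) := by
  rw [partialUpToO_iff] at h
  obtain ⟨hvalid, hlast⟩ := h
  rcases List.eq_nil_or_concat q with rfl | ⟨q', ⟨x, y⟩, rfl⟩
  · exact Or.inl (partialUpToO_iff.mpr ⟨hvalid, by simp⟩)
  simp only [List.concat_eq_append, List.getLast?_concat, Option.mem_def, Option.some.injEq,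
    forall_eq', exists_eq_left'] at hvalid hlast ⊢
  obtain ⟨hxu, hyv⟩ := hlast
  rcases Relation.reflTransGen_iff_eq_or_transGen.mp hxu with rfl | hxu
  · rcases Relation.reflTransGen_iff_eq_or_transGen.mp hyv with rfl | hyv
    · obtain ⟨hq', -, hlt⟩ := List.isChain_append.mp hvalid
      refine Or.inr (Or.inr ⟨q', rfl, partialUpToO_iff.mpr ⟨hq', fun z hz => ?_⟩⟩)
      obtain ⟨hz1, hz2⟩ := hlt z hz _ rfl
      exact ⟨exists_mem_ancO_treeLe_iff.mpr hz1, exists_mem_ancO_treeLe_iff.mpr hz2⟩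
    · refine Or.inr (Or.inl (partialUpToO_iff.mpr ⟨hvalid, ?_⟩))
      simpa using ⟨hxu, exists_mem_ancO_treeLe_iff.mpr hyv⟩
  · refine Or.inl (partialUpToO_iff.mpr ⟨hvalid, ?_⟩)
    simpa using ⟨exists_mem_ancO_treeLe_iff.mpr hxu, hyv⟩

end Matching

lemma score_append_singleton {n m : ℕ} {S : Type*} (w : S → S → ℝ)
    (φG : Fin (n+1) → S) (φH : Fin (m+1) → S) (q : List (Fin (n+1) × Fin (m+1)))
    (x : Fin (n+1) × Fin (m+1)) :
    score w φG φH (q ++ [x]) = score w φG φH q + w (φG x.1) (φH x.2) := by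
  simp [score]

section Table

variable {n m : ℕ} {ancG : Fin (n+1) → Fin (n+1)} {ancH : Fin (m+1) → Fin (m+1)}
  {S : Type*} {φG : Fin (n+1) → S} {φH : Fin (m+1) → S} {w : S → S → ℝ}
  {A : Option (Fin (n+1)) → Option (Fin (m+1)) → ℝ}

theorem exists_partialUpToO_score_eq
    (hG : ∀ v : Fin (n+1), v ≠ 0 → ancG v < v) (hH : ∀ v : Fin (m+1), v ≠ 0 → ancH v < v)
    (hAbase1 : ∀ v? : Option (Fin (m+1)), A none v? = 0)
    (hAbase2 : ∀ u? : Option (Fin (n+1)), A u? none = 0)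
    (hArec : ∀ (u : Fin (n+1)) (v : Fin (m+1)),
      A (some u) (some v) =
        max (max (A (ancO ancG u) (some v)) (A (some u) (ancO ancH v)))
          (w (φG u) (φH v) + A (ancO ancG u) (ancO ancH v)))
    (u? : Option (Fin (n+1))) (v? : Option (Fin (m+1))) :
    ∃ q, PartialUpToO ancG ancH q u? v? ∧ score w φG φH q = A u? v? := by
  induction u?, v? using ancO_induction hG hH with
  | none_left v? => exact ⟨[], rfl, by simp [score, hAbase1]⟩
  | none_right u? => exact ⟨[], by cases u? <;> rfl, by simp [score, hAbase2]⟩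
  | step u v ihG ihH ihGH =>
    obtain ⟨qG, hqG, hsG⟩ := ihG
    obtain ⟨qH, hqH, hsH⟩ := ihH
    obtain ⟨qGH, hqGH, hsGH⟩ := ihGH
    rw [hArec]
    rcases max_choice (max (A (ancO ancG u) (some v)) (A (some u) (ancO ancH v)))
      (w (φG u) (φH v) + A (ancO ancG u) (ancO ancH v)) with h | h <;> rw [h]
    · rcases max_choice (A (ancO ancG u) (some v)) (A (some u) (ancO ancH v)) with h | h <;>
        rw [h]
      · exact ⟨qG, hqG.of_ancO_left, hsG⟩
      · exact ⟨qH, hqH.of_ancO_right, hsH⟩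
    · refine ⟨qGH ++ [(u, v)], hqGH.append_singleton, ?_⟩
      rw [score_append_singleton, hsGH, add_comm]

theorem score_le_of_partialUpToO
    (hG : ∀ v : Fin (n+1), v ≠ 0 → ancG v < v) (hH : ∀ v : Fin (m+1), v ≠ 0 → ancH v < v)
    (hAbase1 : ∀ v? : Option (Fin (m+1)), A none v? = 0)
    (hAbase2 : ∀ u? : Option (Fin (n+1)), A u? none = 0)
    (hArec : ∀ (u : Fin (n+1)) (v : Fin (m+1)),
      A (some u) (some v) =
        max (max (A (ancO ancG u) (some v)) (A (some u) (ancO ancH v)))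
          (w (φG u) (φH v) + A (ancO ancG u) (ancO ancH v)))
    (u? : Option (Fin (n+1))) (v? : Option (Fin (m+1))) (q : List (Fin (n+1) × Fin (m+1)))
    (hq : PartialUpToO ancG ancH q u? v?) : score w φG φH q ≤ A u? v? := by
  induction u?, v? using ancO_induction hG hH generalizing q with
  | none_left v? =>
    obtain rfl : q = [] := hq
    simp [score, hAbase1]
  | none_right u? =>
    obtain rfl : q = [] := by cases u? <;> exact hq
    simp [score, hAbase2]
  | step u v ihG ihH ihGH =>
    rw [hArec]
    rcases hq.cases with hq | hq | ⟨q', rfl, hq'⟩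
    · exact (ihG q hq).trans ((le_max_left _ _).trans (le_max_left _ _))
    · exact (ihH q hq).trans ((le_max_right _ _).trans (le_max_left _ _))
    · calc score w φG φH (q' ++ [(u, v)])
          = w (φG u) (φH v) + score w φG φH q' := by rw [score_append_singleton, add_comm]
        _ ≤ w (φG u) (φH v) + A (ancO ancG u) (ancO ancH v) := by gcongr; exact ihGH q' hq'
        _ ≤ _ := le_max_right _ _

end Table

theorem similarity_score_attained_general
    (n m : ℕ) (ancG : Fin (n+1) → Fin (n+1)) (ancH : Fin (m+1) → Fin (m+1))
    (hG : ∀ v : Fin (n+1), v ≠ 0 → ancG v < v)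
    (hH : ∀ v : Fin (m+1), v ≠ 0 → ancH v < v)
    {S : Type*} (φG : Fin (n+1) → S) (φH : Fin (m+1) → S)
    (w : S → S → ℝ)
    (A : Option (Fin (n+1)) → Option (Fin (m+1)) → ℝ)
    (hAbase1 : ∀ v? : Option (Fin (m+1)), A none v? = 0)
    (hAbase2 : ∀ u? : Option (Fin (n+1)), A u? none = 0)
    (hArec : ∀ (u : Fin (n+1)) (v : Fin (m+1)),
      A (some u) (some v) =
        max (max (A (ancO ancG u) (some v)) (A (some u) (ancO ancH v)))
          (w (φG u) (φH v) + A (ancO ancG u) (ancO ancH v))) :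
    ∃ p : List (Fin (n+1) × Fin (m+1)),
      ValidMatching ancG ancH p ∧
      IsGreatest {x : ℝ | ∃ q : List (Fin (n+1) × Fin (m+1)),
          ValidMatching ancG ancH q ∧ score w φG φH q = x} (score w φG φH p) ∧
      score w φG φH p =
        (Finset.univ : Finset (Fin (n+1) × Fin (m+1))).sup' Finset.univ_nonempty
          (fun uv => A (some uv.1) (some uv.2)) := by
  set f := fun uv : Fin (n+1) × Fin (m+1) => A (some uv.1) (some uv.2)
  obtain ⟨⟨u, v⟩, -, hsup⟩ := Finset.exists_mem_eq_sup' Finset.univ_nonempty f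
  obtain ⟨p, hp, hps⟩ :=
    exists_partialUpToO_score_eq hG hH hAbase1 hAbase2 hArec (some u) (some v)
  refine ⟨p, hp.1, ⟨⟨p, hp.1, rfl⟩, ?_⟩, hps.trans hsup.symm⟩
  rintro _ ⟨q, hq, rfl⟩
  obtain ⟨u', v', hq'⟩ := hq.exists_partialUpTo
  calc score w φG φH q ≤ f (u', v') :=
        score_le_of_partialUpToO hG hH hAbase1 hAbase2 hArec (some u') (some v') q hq'
    _ ≤ Finset.univ.sup' Finset.univ_nonempty f := Finset.le_sup' f (Finset.mem_univ _)
    _ = score w φG φH p := hsup.trans hps.symm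

/-- There exists a valid matching `p` whose score attains the similarity score,
which equals the maximum of the DP table entries over all (non-virtual) pairs `(u, v)`. -/
theorem similarity_score_attained
    (n m : ℕ) (ancG : Fin (n+1) → Fin (n+1)) (ancH : Fin (m+1) → Fin (m+1))
    (hG : ∀ v : Fin (n+1), v ≠ 0 → ancG v < v)
    (hH : ∀ v : Fin (m+1), v ≠ 0 → ancH v < v)
    {S : Type*} (φG : Fin (n+1) → S) (φH : Fin (m+1) → S)
    (w : S → S → ℝ) (hw : ∀ a b : S, 0 ≤ w a b)
    (A : Option (Fin (n+1)) → Option (Fin (m+1)) → ℝ)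
    (hAbase1 : ∀ v? : Option (Fin (m+1)), A none v? = 0)
    (hAbase2 : ∀ u? : Option (Fin (n+1)), A u? none = 0)
    (hArec : ∀ (u : Fin (n+1)) (v : Fin (m+1)),
      A (some u) (some v) =
        max (max (A (ancO ancG u) (some v)) (A (some u) (ancO ancH v)))
          (w (φG u) (φH v) + A (ancO ancG u) (ancO ancH v))) :
    ∃ p : List (Fin (n+1) × Fin (m+1)),
      ValidMatching ancG ancH p ∧
      IsGreatest {x : ℝ | ∃ q : List (Fin (n+1) × Fin (m+1)),
          ValidMatching ancG ancH q ∧ score w φG φH q = x} (score w φG φH p) ∧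
      score w φG φH p =
        (Finset.univ : Finset (Fin (n+1) × Fin (m+1))).sup' Finset.univ_nonempty
          (fun uv => A (some uv.1) (some uv.2)) :=
  similarity_score_attained_general n m ancG ancH hG hH φG φH w A hAbase1 hAbase2 hArec
end
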